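/- arXiv:1111.0489 — 3 statements merged into one kernel-verified Lean document; each statement's English description precedes it below -/
import Mathlib

section
/- If Σ is a subsemigroup of a group G and Σ is infinite, then there exists a sequence α₁, α₂, α₃, … of elements of Σ such that no finite product α_{i₁} α_{i₂} ⋯ α_{iₙ} with i₁ < i₂ < ⋯ < iₙ equals the identity element of G. -/
/-!
Choose the terms greedily: as `Σ` is infinite, `α k` can be taken in `Σ` outside the finite set of
inverses of products of subsequences of `α 0, …, α (k - 1)`. A nonempty increasing product ends in
some factor `α k`, which by construction is not the inverse of the product of the factors before it.
-/

theorem Set.Infinite.exists_seq_mem_notMem_prefix {α : Type*} {S : Set α} (hS : S.Infinite)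
    (bad : List α → Set α) (hbad : ∀ L, (bad L).Finite) :
    ∃ f : ℕ → α, ∀ n, f n ∈ S ∧ f n ∉ bad ((List.range n).map f) := by
  choose next hnext using fun L => (hS.sdiff (hbad L)).nonempty
  let pre : ℕ → List α := fun n => Nat.rec [] (fun _ L => L ++ [next L]) n
  have hpre : ∀ n, pre n = (List.range n).map (fun k => next (pre k)) := by
    intro n
    induction n with
    | zero => rfl
    | succ n ih => rw [List.range_succ, List.map_append, ← ih]; rfl
  exact ⟨fun n => next (pre n), fun n => hpre n ▸ hnext (pre n)⟩

theorem List.finite_setOf_sublist {α : Type*} (L : List α) :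
    {s : List α | s.Sublist L}.Finite := by
  simpa only [List.mem_sublists] using L.sublists.finite_toSet

theorem List.IsChain.sublist_range {l : List ℕ} {n : ℕ} (hl : l.IsChain (· < ·))
    (hn : ∀ i ∈ l, i < n) : l.Sublist (List.range n) := by
  have hpw := List.isChain_iff_pairwise.mp hl
  refine List.sublist_of_subperm_of_pairwise (r := (· < ·)) ?_ hpw List.pairwise_lt_range
  exact List.subperm_of_subset hpw.nodup fun i hi => List.mem_range.mpr (hn i hi)

theorem List.IsChain.sublist_range_of_append_singleton {l : List ℕ} {k : ℕ}
    (hl : (l ++ [k]).IsChain (· < ·)) : l.Sublist (List.range k) := by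
  have hlt : ∀ i ∈ l ++ [k], i < k + 1 := by
    intro i hi
    rcases List.mem_append.mp hi with hi | hi
    · exact Nat.lt_succ_of_lt <| (List.pairwise_append.mp (List.isChain_iff_pairwise.mp hl)).2.2
        i hi k (List.mem_singleton_self k)
    · exact List.mem_singleton.mp hi ▸ k.lt_succ_self
  rw [← List.append_sublist_append_right [k], ← List.range_succ]
  exact hl.sublist_range hlt

theorem exists_nondegenerate_sequence_of_infinite_subsemigroup_general
    {G : Type*} [Group G] (Sig : Set G) (hinf : Sig.Infinite) :
    ∃ α : ℕ → G, (∀ n, α n ∈ Sig) ∧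
      ∀ l : List ℕ, l ≠ [] → l.Chain' (· < ·) → (l.map α).prod ≠ 1 := by
  obtain ⟨α, hα⟩ := hinf.exists_seq_mem_notMem_prefix
    (fun L => (fun s : List G => s.prod⁻¹) '' {s | s.Sublist L})
    fun L => L.finite_setOf_sublist.image _
  refine ⟨α, fun n => (hα n).1, fun l hne hl hprod => ?_⟩
  obtain ⟨l, k, rfl⟩ := l.eq_nil_or_concat'.resolve_left hne
  refine (hα k).2 ⟨l.map α, hl.sublist_range_of_append_singleton.map α, ?_⟩
  simpa using inv_eq_of_mul_eq_one_right (by simpa using hprod)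

/-- If `Σ` is an infinite subsemigroup of a group `G`, there is a sequence
`α : ℕ → G` of elements of `Σ` such that no ordered product over a nonempty
strictly increasing finite sequence of indices equals the identity. -/
theorem exists_nondegenerate_sequence_of_infinite_subsemigroup
    {G : Type*} [Group G] (Sig : Set G) (hinf : Sig.Infinite)
    (hmul : ∀ a ∈ Sig, ∀ b ∈ Sig, a * b ∈ Sig) :
    ∃ α : ℕ → G, (∀ n, α n ∈ Sig) ∧
      ∀ l : List ℕ, l ≠ [] → l.Chain' (· < ·) → (l.map α).prod ≠ 1 :=
  exists_nondegenerate_sequence_of_infinite_subsemigroup_general Sig hinf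
end

section
/- Let G act on a probability space (X, ν) by non-singular transformations such that the action is SAT. Then for every measurable A ⊆ X with ν(A) > 0 and every integer k ≥ 1, there exists γ ∈ G with γ ≠ id such that ν(A ∩ γ⁻¹A ∩ γ⁻²A ∩ ⋯ ∩ γ⁻ᵏA) > 0. -/
open MeasureTheory Filter
open scoped ENNReal Pointwise Topology

/-- If `μ ≪ ν` are finite measures and `ν (s n) → 0`, then `μ (s n) → 0`. -/
lemma tendsto_measure_zero_of_absolutelyContinuous {X : Type*} [MeasurableSpace X]
    {μ ν : Measure X} [IsFiniteMeasure μ] [IsFiniteMeasure ν] (hμν : μ ≪ ν)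
    {s : ℕ → Set X} (h : Tendsto (fun n => ν (s n)) atTop (𝓝 0)) :
    Tendsto (fun n => μ (s n)) atTop (𝓝 0) := by
  have h1 : (fun n => μ (s n)) = fun n => ∫⁻ x in s n, μ.rnDeriv ν x ∂ν :=
    funext fun n => (Measure.setLIntegral_rnDeriv hμν (s n)).symm
  rw [h1]
  exact tendsto_setLIntegral_zero (Measure.lintegral_rnDeriv_lt_top μ ν).ne h

/-- Multiple recurrence for SAT actions: if a nontrivial group `G` acts by
non-singular measurable transformations on a probability space `(X, ν)` and the
action is SAT, then for every measurable `A` with `ν A > 0` and every `k ≥ 1`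
there is `γ ≠ 1` with `ν (A ∩ γ⁻¹A ∩ ⋯ ∩ γ⁻ᵏA) > 0`. -/
theorem multiple_recurrence_SAT {G X : Type*} [Group G] [Nontrivial G]
    [MulAction G X] [MeasurableSpace X]
    (ν : Measure X) [IsProbabilityMeasure ν]
    (hmeas : ∀ g : G, Measurable fun x : X => g • x)
    (hns : ∀ (g : G) (A : Set X), MeasurableSet A → ν A = 0 → ν (g • A) = 0)
    (hSAT : ∀ A : Set X, MeasurableSet A → 0 < ν A →
      ∃ g : ℕ → G, Tendsto (fun n => ν (g n • A)) atTop (𝓝 1))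
    (A : Set X) (hA : MeasurableSet A) (hApos : 0 < ν A)
    (k : ℕ) (hk : 1 ≤ k) :
    ∃ γ : G, γ ≠ 1 ∧
      0 < ν (A ∩ ⋂ j ∈ Finset.Icc 1 k, (fun x : X => γ ^ j • x) ⁻¹' A) := by
  obtain ⟨γ₀, hγ₀⟩ := exists_ne (1 : G)
  obtain ⟨h, hh⟩ := hSAT A hA hApos
  set B : ℕ → Set X := fun n => h n • A with hB
  have hBeq : ∀ n, B n = (fun x => (h n)⁻¹ • x) ⁻¹' A := by
    intro n
    rw [Set.preimage_smul, inv_inv]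
  have hBmeas : ∀ n, MeasurableSet (B n) := fun n =>
    (hBeq n) ▸ hmeas ((h n)⁻¹) hA
  -- the measure of the complement of `B n` tends to `0`
  have hcompl : Tendsto (fun n => ν (B n)ᶜ) atTop (𝓝 0) := by
    have heq : ∀ n, ν (B n)ᶜ = 1 - ν (B n) := fun n => by
      rw [measure_compl (hBmeas n) (measure_ne_top ν _), measure_univ]
    simp only [heq]
    have := ENNReal.Tendsto.sub (tendsto_const_nhds (x := (1 : ℝ≥0∞))) hh
      (Or.inl ENNReal.one_ne_top)
    simpa using this
  -- key: pullbacks under powers of `γ₀` of the complements also tend to `0`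
  have key : ∀ j : ℕ,
      Tendsto (fun n => ν ((fun x => γ₀ ^ j • x) ⁻¹' (B n)ᶜ)) atTop (𝓝 0) := by
    intro j
    set μ := Measure.map (fun x : X => γ₀ ^ j • x) ν with hμ
    have hmap : ∀ C : Set X, MeasurableSet C →
        μ C = ν ((fun x => γ₀ ^ j • x) ⁻¹' C) := fun C hC =>
      Measure.map_apply (hmeas _) hC
    have hfin : IsFiniteMeasure μ := by
      refine ⟨?_⟩
      rw [hmap _ MeasurableSet.univ]
      simp
    have hac : μ ≪ ν := by
      refine Measure.AbsolutelyContinuous.mk fun C hC h0 => ?_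
      rw [hmap C hC, Set.preimage_smul]
      exact hns _ C hC h0
    have := tendsto_measure_zero_of_absolutelyContinuous hac
      (s := fun n => (B n)ᶜ) hcompl
    have heq : (fun n => ν ((fun x => γ₀ ^ j • x) ⁻¹' (B n)ᶜ))
        = fun n => μ (B n)ᶜ :=
      funext fun n => (hmap _ (hBmeas n).compl).symm
    rw [heq]
    exact this
  -- the total error tends to `0`, so eventually it is `< 1`
  have hsum : Tendsto (fun n => ν (B n)ᶜ +
      ∑ j ∈ Finset.Icc 1 k, ν ((fun x => γ₀ ^ j • x) ⁻¹' (B n)ᶜ)) atTop (𝓝 0) := by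
    have hs : Tendsto (fun n => ∑ j ∈ Finset.Icc 1 k,
        ν ((fun x => γ₀ ^ j • x) ⁻¹' (B n)ᶜ)) atTop (𝓝 0) := by
      have := tendsto_finset_sum (Finset.Icc 1 k)
        (fun j (_ : j ∈ Finset.Icc 1 k) => key j)
      simpa using this
    have := Tendsto.add hcompl hs
    simpa using this
  obtain ⟨n, hn⟩ := (hsum.eventually_lt_const (by norm_num : (0:ℝ≥0∞) < 1)).exists
  set g := h n with hg
  refine ⟨g⁻¹ * γ₀ * g, ?_, ?_⟩
  · intro e
    apply hγ₀
    have : γ₀ = g * (g⁻¹ * γ₀ * g) * g⁻¹ := by group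
    rw [this, e]
    group
  · set γ := g⁻¹ * γ₀ * g with hγdef
    have hconj : ∀ j : ℕ, γ ^ j = g⁻¹ * γ₀ ^ j * g := by
      intro j
      induction j with
      | zero => simp
      | succ m ih => rw [pow_succ, pow_succ, ih, hγdef]; group
    set T : Set X := A ∩ ⋂ j ∈ Finset.Icc 1 k, (fun x : X => γ ^ j • x) ⁻¹' A with hT
    have hTmeas : MeasurableSet T :=
      hA.inter (MeasurableSet.iInter fun j =>
        MeasurableSet.iInter fun _ => hmeas _ hA)
    rw [pos_iff_ne_zero]
    intro h0
    have hgT : ν (g • T) = 0 := hns g T hTmeas h0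
    -- the "shifted" set
    set S : Set X := B n ∩ ⋂ j ∈ Finset.Icc 1 k, (fun x : X => γ₀ ^ j • x) ⁻¹' (B n)
      with hS
    have hSmeas : MeasurableSet S :=
      (hBmeas n).inter (MeasurableSet.iInter fun j =>
        MeasurableSet.iInter fun _ => hmeas _ (hBmeas n))
    -- `S ⊆ g • T`
    have hsub : S ⊆ g • T := by
      rintro y ⟨hyB, hyI⟩
      simp only [Set.mem_iInter] at hyI
      obtain ⟨x, hxA, rfl⟩ := hyB
      refine ⟨x, ⟨hxA, ?_⟩, rfl⟩
      simp only [Set.mem_iInter]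
      intro j hj
      have hmem : γ₀ ^ j • g • x ∈ B n := hyI j hj
      obtain ⟨a, haA, ha⟩ := hmem
      have : γ ^ j • x = a := by
        rw [hconj j, mul_smul, mul_smul, ← ha, inv_smul_smul]
      simpa [Set.mem_preimage, this] using haA
    have hS0 : ν S = 0 := measure_mono_null hsub hgT
    -- but `ν S > 0` since the complement has measure `< 1`
    have hScompl : Sᶜ = (B n)ᶜ ∪ ⋃ j ∈ Finset.Icc 1 k,
        (fun x : X => γ₀ ^ j • x) ⁻¹' (B n)ᶜ := by
      simp [hS, Set.compl_inter, Set.compl_iInter, Set.preimage_compl]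
    have hSc : ν Sᶜ < 1 := by
      rw [hScompl]
      calc ν ((B n)ᶜ ∪ ⋃ j ∈ Finset.Icc 1 k, (fun x : X => γ₀ ^ j • x) ⁻¹' (B n)ᶜ)
          ≤ ν (B n)ᶜ + ν (⋃ j ∈ Finset.Icc 1 k, (fun x : X => γ₀ ^ j • x) ⁻¹' (B n)ᶜ) :=
            measure_union_le _ _
        _ ≤ ν (B n)ᶜ + ∑ j ∈ Finset.Icc 1 k, ν ((fun x : X => γ₀ ^ j • x) ⁻¹' (B n)ᶜ) := by
            gcongr
            exact measure_biUnion_finset_le _ _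
        _ < 1 := hn
    rw [measure_compl hSmeas (measure_ne_top ν _), measure_univ, hS0, tsub_zero] at hSc
    exact absurd hSc (lt_irrefl _)
end

section
/- Let (Ω, P) be a probability space, δ > 0, ℓ ≥ 1, and let N(δ, ℓ) be a Szemerédi bound: every subset E ⊆ {1, …, n} with |E| ≥ δn and n ≥ N(δ, ℓ) contains an ℓ-term arithmetic progression. Then for any n ≥ N(δ, ℓ) and measurable sets A₁, …, A_n ⊆ Ω with P(A_i) > δ for all i, there exist a ≥ 1 and d ≥ 1 with a + (ℓ−1)d ≤ n and P(A_a ∩ A_{a+d} ∩ ⋯ ∩ A_{a+(ℓ−1)d}) > 0. -/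
open MeasureTheory
open scoped ENNReal

/-- Szemerédi-based pigeonhole: if `N` is a Szemerédi bound for density `δ` and
length `ℓ`, then given `n ≥ N` measurable sets `A₁, …, A_n` each of measure
`> δ` in a probability space, some `ℓ`-term arithmetic progression of the sets
has an intersection of positive measure. -/
theorem szemeredi_pigeonhole {Ω : Type*} [MeasurableSpace Ω]
    (P : Measure Ω) [IsProbabilityMeasure P]
    (δ : ℝ) (hδ : 0 < δ) (ℓ : ℕ) (hℓ : 1 ≤ ℓ) (N : ℕ)
    (hN : ∀ n : ℕ, N ≤ n → ∀ E : Finset ℕ, E ⊆ Finset.Icc 1 n →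
      δ * n ≤ E.card →
      ∃ a ≥ 1, ∃ d ≥ 1, ∀ j < ℓ, a + j * d ∈ E)
    (n : ℕ) (hn : N ≤ n) (A : ℕ → Set Ω)
    (hAmeas : ∀ i ∈ Finset.Icc 1 n, MeasurableSet (A i))
    (hA : ∀ i ∈ Finset.Icc 1 n, ENNReal.ofReal δ < P (A i)) :
    ∃ a ≥ 1, ∃ d ≥ 1, a + (ℓ - 1) * d ≤ n ∧
      0 < P (⋂ j ∈ Finset.range ℓ, A (a + j * d)) := by
  classical
  rcases Nat.eq_zero_or_pos n with hn0 | hn1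
  · subst hn0
    obtain ⟨a, ha, d, hd, h⟩ := hN 0 hn ∅ (Finset.empty_subset _) (by simp)
    exact absurd (h 0 (by omega)) (by simp)
  set E : Ω → Finset ℕ := fun ω => (Finset.Icc 1 n).filter (fun i => ω ∈ A i) with hE
  set S : Set Ω := {ω | (δ * n : ℝ) ≤ (E ω).card} with hSdef
  set T : Finset (ℕ × ℕ) := (Finset.Icc 1 n ×ˢ Finset.Icc 1 n).filter
      (fun p : ℕ × ℕ => p.1 + (ℓ - 1) * p.2 ≤ n) with hT
  have hScov : S ⊆ ⋃ p ∈ T, ⋂ j ∈ Finset.range ℓ, A (p.1 + j * p.2) := by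
    intro ω hω
    obtain ⟨a, ha, d, hd, hj⟩ := hN n hn (E ω) (Finset.filter_subset _ _) hω
    have hmem : ∀ j < ℓ, (a + j * d) ∈ Finset.Icc 1 n ∧ ω ∈ A (a + j * d) := by
      intro j hjℓ
      have h2 := hj j hjℓ
      simp only [hE, Finset.mem_filter] at h2
      exact h2
    have ha_mem : a ∈ Finset.Icc 1 n := by
      have := (hmem 0 (by omega)).1; simpa using this
    have hlast : a + (ℓ - 1) * d ≤ n := by
      have := (hmem (ℓ - 1) (by omega)).1
      exact (Finset.mem_Icc.mp this).2
    by_cases hdn : d ≤ n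
    · simp only [Set.mem_iUnion]
      refine ⟨(a, d), ?_, ?_⟩
      · simp only [hT, Finset.mem_filter, Finset.mem_product]
        exact ⟨⟨ha_mem, Finset.mem_Icc.mpr ⟨hd, hdn⟩⟩, hlast⟩
      · simp only [Set.mem_iInter, Finset.mem_range]
        intro j hjℓ
        exact (hmem j hjℓ).2
    · have hℓ1 : ℓ = 1 := by
        by_contra hne
        have hℓ2 : 2 ≤ ℓ := by omega
        have hd' : d ≤ (ℓ - 1) * d := Nat.le_mul_of_pos_left d (by omega)
        omega
      simp only [Set.mem_iUnion]
      refine ⟨(a, 1), ?_, ?_⟩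
      · simp only [hT, Finset.mem_filter, Finset.mem_product]
        refine ⟨⟨ha_mem, Finset.mem_Icc.mpr ⟨le_refl 1, hn1⟩⟩, ?_⟩
        simp [hℓ1]
        exact (Finset.mem_Icc.mp ha_mem).2
      · simp only [Set.mem_iInter, Finset.mem_range, hℓ1]
        intro j hj1
        interval_cases j
        simpa using (hmem 0 (by omega)).2
  have hSpos : 0 < P S := by
    rw [pos_iff_ne_zero]
    intro hPS
    have hae : ∀ᵐ ω ∂P, ((E ω).card : ℝ) < δ * n := by
      rw [ae_iff]
      simpa [hSdef, not_lt] using hPS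
    set m : ℕ := ⌈δ * n⌉₊ with hm
    have hδn : (0:ℝ) < δ * n := by positivity
    have hm1 : (0:ℕ) < m := Nat.ceil_pos.mpr hδn
    have hmlt : ((m - 1 : ℕ) : ℝ) < δ * n := by
      by_contra hle
      push_neg at hle
      have : m ≤ m - 1 := Nat.ceil_le.mpr hle
      omega
    have hcard : ∀ᵐ ω ∂P, ((E ω).card : ℝ≥0∞) ≤ ((m - 1 : ℕ) : ℝ≥0∞) := by
      refine hae.mono fun ω h => ?_
      have h1 : (E ω).card < m := Nat.lt_ceil.mpr h
      exact_mod_cast Nat.le_sub_one_of_lt h1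
    have hint : ∫⁻ ω, ((E ω).card : ℝ≥0∞) ∂P = ∑ i ∈ Finset.Icc 1 n, P (A i) := by
      have heq : ∀ ω, ((E ω).card : ℝ≥0∞)
          = ∑ i ∈ Finset.Icc 1 n, (A i).indicator (1 : Ω → ℝ≥0∞) ω := by
        intro ω
        show (((Finset.Icc 1 n).filter (fun i => ω ∈ A i)).card : ℝ≥0∞) = _
        rw [Finset.card_filter]
        push_cast
        refine Finset.sum_congr rfl fun i _ => ?_
        by_cases h : ω ∈ A i <;> simp [Set.indicator_apply, h]
      simp_rw [heq]
      rw [lintegral_finset_sum]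
      · exact Finset.sum_congr rfl fun i hi => lintegral_indicator_one (hAmeas i hi)
      · exact fun i hi => measurable_const.indicator (hAmeas i hi)
    have hub : ∫⁻ ω, ((E ω).card : ℝ≥0∞) ∂P ≤ ((m - 1 : ℕ) : ℝ≥0∞) := by
      calc ∫⁻ ω, ((E ω).card : ℝ≥0∞) ∂P
          ≤ ∫⁻ _, ((m - 1 : ℕ) : ℝ≥0∞) ∂P := lintegral_mono_ae hcard
        _ = ((m - 1 : ℕ) : ℝ≥0∞) := by simp
    have hlb : ENNReal.ofReal (δ * n) ≤ ∑ i ∈ Finset.Icc 1 n, P (A i) := by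
      calc ENNReal.ofReal (δ * n) = ENNReal.ofReal δ * n := by
            rw [ENNReal.ofReal_mul hδ.le, ENNReal.ofReal_natCast]
        _ = ∑ _i ∈ Finset.Icc 1 n, ENNReal.ofReal δ := by
            simp [Finset.sum_const, Nat.card_Icc, mul_comm]
        _ ≤ ∑ i ∈ Finset.Icc 1 n, P (A i) :=
            Finset.sum_le_sum fun i hi => (hA i hi).le
    have hfinal : ENNReal.ofReal (δ * n) ≤ ((m - 1 : ℕ) : ℝ≥0∞) := by
      rw [hint] at hub; exact hlb.trans hub
    have : ((m - 1 : ℕ) : ℝ≥0∞) < ENNReal.ofReal (δ * n) := by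
      rw [← ENNReal.ofReal_natCast]
      exact (ENNReal.ofReal_lt_ofReal_iff hδn).mpr hmlt
    exact absurd hfinal this.not_ge
  have hsum : 0 < ∑ p ∈ T, P (⋂ j ∈ Finset.range ℓ, A (p.1 + j * p.2)) :=
    hSpos.trans_le ((measure_mono hScov).trans (measure_biUnion_finset_le _ _))
  obtain ⟨p, hpT, hp⟩ := Finset.exists_ne_zero_of_sum_ne_zero hsum.ne'
  simp only [hT, Finset.mem_filter, Finset.mem_product, Finset.mem_Icc] at hpT
  exact ⟨p.1, hpT.1.1.1, p.2, hpT.1.2.1, hpT.2, pos_iff_ne_zero.mpr hp⟩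
end
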